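/- arXiv:1604.00528 — 3 statements merged into one kernel-verified Lean document; each statement's English description precedes it below -/
import Mathlib

section
/- Let h ⊆ g₂* be an indecomposable Lie subalgebra and let E ⊆ V be an h-invariant isotropic subspace with dim E = 1. Then Ê(E) := {v ∈ V : v × e = 0 for all e ∈ E} is a 3-dimensional isotropic h-invariant subspace of V containing E. -/
noncomputable section

open scoped Matrix

attribute [local instance 100] LieRing.ofAssociativeRing

abbrev V7 : Type := Fin 7 → ℝ
abbrev M7 : Type := Matrix (Fin 7) (Fin 7) ℝ
abbrev M2 : Type := Matrix (Fin 2) (Fin 2) ℝ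

/-- standard basis vectors of `V7` -/
def stdB (i : Fin 7) : V7 := Pi.single i 1

/-- the symmetric bilinear form of signature (4,3):
`⟨x,y⟩ = x₁y₅ + x₅y₁ + x₂y₆ + x₆y₂ + x₃y₇ + x₇y₃ − x₄y₄` (1-indexed). -/
def bform (x y : V7) : ℝ :=
  x 0 * y 4 + x 4 * y 0 + x 1 * y 5 + x 5 * y 1 + x 2 * y 6 + x 6 * y 2 - x 3 * y 3

/-- `e^i ∧ e^j ∧ e^k` evaluated on a triple of vectors. -/
def wedge3 (i j k : Fin 7) (u v w : V7) : ℝ :=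
  u i * (v j * w k - v k * w j) - u j * (v i * w k - v k * w i)
    + u k * (v i * w j - v j * w i)

/-- the generic 3-form
`ω₀ = √2(e¹∧e⁶∧e⁷ + e²∧e³∧e⁵) − e⁴∧(e¹∧e⁵ − e²∧e⁶ − e³∧e⁷)` (1-indexed). -/
def omega0 (u v w : V7) : ℝ :=
  Real.sqrt 2 * (wedge3 0 5 6 u v w + wedge3 1 2 4 u v w)
    - (wedge3 3 0 4 u v w - wedge3 3 1 5 u v w - wedge3 3 2 6 u v w)

/-- membership in `g₂*` -/
def inG2 (X : M7) : Prop :=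
  ∀ u v w : V7,
    omega0 (X.mulVec u) v w + omega0 u (X.mulVec v) w + omega0 u v (X.mulVec w) = 0

def InvariantUnder (h : LieSubalgebra ℝ M7) (U : Submodule ℝ V7) : Prop :=
  ∀ X ∈ h, ∀ v ∈ U, X.mulVec v ∈ U

def IsIsotropic (U : Submodule ℝ V7) : Prop :=
  ∀ u ∈ U, ∀ u' ∈ U, bform u u' = 0

def IsNondeg (U : Submodule ℝ V7) : Prop :=
  ∀ u ∈ U, (∀ u' ∈ U, bform u u' = 0) → u = 0

def IsIndecomposable (h : LieSubalgebra ℝ M7) : Prop :=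
  ∀ U : Submodule ℝ V7, InvariantUnder h U → U ≠ ⊥ → U ≠ ⊤ → ¬ IsNondeg U

def IsIrreducibleSub (h : LieSubalgebra ℝ M7) (U : Submodule ℝ V7) : Prop :=
  InvariantUnder h U ∧ U ≠ ⊥ ∧
    ∀ W : Submodule ℝ V7, InvariantUnder h W → W ≤ U → W = ⊥ ∨ W = U

/-- the socle: sum of all irreducible invariant subspaces -/
def socleV (h : LieSubalgebra ℝ M7) : Submodule ℝ V7 :=
  sSup {U | IsIrreducibleSub h U}

def sqrt2 : ℝ := Real.sqrt 2

/-- the matrix `h(A,v,u,y)` of the Type I normal form -/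
def hImat (A : M2) (v : ℝ) (u y : Fin 2 → ℝ) : M7 :=
  !![A.trace, -u 1, u 0, sqrt2 * v, 0, -y 0, -y 1;
     0, A 0 0, A 0 1, sqrt2 * u 0, y 0, 0, v;
     0, A 1 0, A 1 1, sqrt2 * u 1, y 1, -v, 0;
     0, 0, 0, 0, sqrt2 * v, sqrt2 * u 0, sqrt2 * u 1;
     0, 0, 0, 0, -A.trace, 0, 0;
     0, 0, 0, 0, u 1, -A 0 0, -A 1 0;
     0, 0, 0, 0, -u 0, -A 0 1, -A 1 1]

def hIset : Set M7 := {X | ∃ A v u y, X = hImat A v u y}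

def mSet : Set M7 := {X | ∃ v u y, X = hImat 0 v u y}

def hsSet : Set M7 := {X | ∃ A v y, X = hImat A v 0 y}

/-- a basis realizing the Type I normal form -/
def TypeIBasis (b : Module.Basis (Fin 7) ℝ V7) : Prop :=
  (∀ i j, bform (b i) (b j) = bform (stdB i) (stdB j)) ∧
  (∀ i j k, omega0 (b i) (b j) (b k) = omega0 (stdB i) (stdB j) (stdB k))

/-- the matrix of (the endomorphism given by) `X` with respect to the basis `b` -/
def matrixWrt (b : Module.Basis (Fin 7) ℝ V7) (X : M7) : M7 :=
  LinearMap.toMatrix b b X.mulVecLin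

def matSet (b : Module.Basis (Fin 7) ℝ V7) (h : LieSubalgebra ℝ M7) : Set M7 :=
  matrixWrt b '' (h : Set M7)

/-- the space `K(S)` of algebraic curvature maps with values in `S` -/
def curvSet (S : Set M7) : Set (V7 →ₗ[ℝ] V7 →ₗ[ℝ] M7) :=
  {R | (∀ x, R x x = 0) ∧ (∀ x y, R x y ∈ S) ∧
    ∀ x y z, (R x y).mulVec z + (R y z).mulVec x + (R z x).mulVec y = 0}

/-- `h` is a Berger algebra -/
def IsBerger (h : LieSubalgebra ℝ M7) : Prop :=
  h.toSubmodule =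
    Submodule.span ℝ {X | ∃ R ∈ curvSet (h : Set M7), ∃ x y : V7, X = R x y}

def Cmat (a : ℝ) : M2 := !![a, -1; 1, a]
def Smat : M2 := !![1, 1; 0, 1]
def Nmat : M2 := !![0, 1; 0, 0]
def Dmat (μ : ℝ) : M2 := !![1, 0; 0, μ]
def diagSet : Set M2 := {A | ∃ a d : ℝ, A = !![a, 0; 0, d]}
def u1Set : Set M2 := {A | ∃ a b : ℝ, A = !![a, -b; b, a]}
def b2Set : Set M2 := {A | A 1 0 = 0}
def b2hatSet : Set M2 := {A | ∃ s t : ℝ, A = s • (1 : M2) + t • Nmat}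
def sLamSet (lam : ℝ) : Set M2 :=
  {A | ∃ s t : ℝ, A = s • !![lam, 0; 0, lam - 1] + t • Nmat}
def slSet : Set M2 := {A | A.trace = 0}
def spanLine (X : M2) : Set M2 := {A | ∃ t : ℝ, A = t • X}

/-- the projection `h(A,v,u,y) ↦ A` applied to a subset of `h^I` -/
def aprojI (S : Set M7) : Set M2 := {A | ∃ v u y, hImat A v u y ∈ S}

/-- `a ⋉ m` inside `h^I` -/
def semidirI (aS : Set M2) : Set M7 :=
  {X | ∃ A ∈ aS, ∃ v u y, X = hImat A v u y}

def bformII (x y : V7) : ℝ :=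
  x 0 * y 5 + x 5 * y 0 + x 1 * y 6 + x 6 * y 1 + x 2 * y 4 + x 4 * y 2 - x 3 * y 3

def omegaII (u v w : V7) : ℝ :=
  Real.sqrt 2 * (-(wedge3 0 4 6 u v w) + wedge3 1 2 5 u v w)
    - (wedge3 3 0 5 u v w - wedge3 3 1 6 u v w - wedge3 3 2 4 u v w)

/-- a basis realizing the Type II normal form -/
def TypeIIBasis (b : Module.Basis (Fin 7) ℝ V7) : Prop :=
  (∀ i j, bform (b i) (b j) = bformII (stdB i) (stdB j)) ∧
  (∀ i j k, omega0 (b i) (b j) (b k) = omegaII (stdB i) (stdB j) (stdB k))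

def sigmaMat (z : Fin 4 → ℝ) : Matrix (Fin 2) (Fin 3) ℝ :=
  !![z 1, sqrt2 * z 2, z 3; z 0, sqrt2 * z 1, z 2]

def rhoMat (A : M2) : Matrix (Fin 3) (Fin 3) ℝ :=
  !![A 0 0 - A 1 1, -(sqrt2 * A 0 1), 0;
     -(sqrt2 * A 1 0), 0, -(sqrt2 * A 0 1);
     0, -(sqrt2 * A 1 0), -(A 0 0) + A 1 1]

/-- the matrix `h(A,z,c)` of the Type II normal form -/
def hIImat (A : M2) (z : Fin 4 → ℝ) (c : ℝ) : M7 :=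
  !![A 0 0, A 0 1, z 1, sqrt2 * z 2, z 3, 0, -c;
     A 1 0, A 1 1, z 0, sqrt2 * z 1, z 2, c, 0;
     0, 0, A 0 0 - A 1 1, -(sqrt2 * A 0 1), 0, -z 3, -z 2;
     0, 0, -(sqrt2 * A 1 0), 0, -(sqrt2 * A 0 1), sqrt2 * z 2, sqrt2 * z 1;
     0, 0, 0, -(sqrt2 * A 1 0), -(A 0 0) + A 1 1, -z 1, -z 0;
     0, 0, 0, 0, 0, -(A 0 0), -(A 1 0);
     0, 0, 0, 0, 0, -(A 0 1), -(A 1 1)]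

def hIIset : Set M7 := {X | ∃ A z c, X = hIImat A z c}

def nSet : Set M7 := {X | ∃ z c, X = hIImat 0 z c}

/-- the projection `h(A,z,c) ↦ A` applied to a subset of `h^II` -/
def aprojII (S : Set M7) : Set M2 := {A | ∃ z c, hIImat A z c ∈ S}

/-- `a ⋉ n₁` inside `h^II`, for `n₁ = {h(0,z,c) : z ∈ Z, c ∈ ℝ}` -/
def semidirII (aS : Set M2) (Z : Set (Fin 4 → ℝ)) : Set M7 :=
  {X | ∃ A ∈ aS, ∃ z ∈ Z, ∃ c : ℝ, X = hIImat A z c}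

/-- `ℝ·h(A₀,z₀,0) + {h(0,z,c) : z ∈ Z, c ∈ ℝ}` inside `h^II` -/
def affSemiII (A0 : M2) (z0 : Fin 4 → ℝ) (Z : Set (Fin 4 → ℝ)) : Set M7 :=
  {X | ∃ t : ℝ, ∃ z ∈ Z, ∃ c : ℝ, X = hIImat (t • A0) (t • z0 + z) c}

/-- the space of `z ∈ ℝ⁴` supported on the index set `s` -/
def nZ (s : Set (Fin 4)) : Set (Fin 4 → ℝ) := {z | ∀ l, l ∉ s → z l = 0}

abbrev Poly2 := MvPolynomial (Fin 2) ℝ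
def Px : Poly2 := MvPolynomial.X 0
def Py : Poly2 := MvPolynomial.X 1

/-- the `GL(2,ℝ)`-action `(A·p)(x,y) = p((x,y)A)` on polynomials -/
def polyAct (A : M2) (p : Poly2) : Poly2 :=
  MvPolynomial.aeval (fun i => A 0 i • Px + A 1 i • Py) p

/-- projective equivalence of polynomials -/
def ProjEquiv (p q : Poly2) : Prop :=
  ∃ A : M2, IsUnit A ∧ ∃ c : ℝ, c ≠ 0 ∧ polyAct A p = c • q


/-!
Write `L v = v × e` for the spanning null vector `e` of `E`. Everything rests on the
polarized cross product identity `(x × z) × y + (y × z) × x = 2⟨x,y⟩z − ⟨z,x⟩y − ⟨z,y⟩x`.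
Taking `x = z = e` gives `L² v = ⟨e,v⟩ e`, so `L` maps the hyperplane `e^⊥` into `ker L`, and
rank–nullity on `e^⊥` gives `dim ker L ≥ 3`. The same identity also gives `⟨e,v⟩ = 0` for
`v ∈ ker L`, and then, with `z = e` and `x, y ∈ ker L`, `2⟨x,y⟩ e = 0`: `ker L` is isotropic.
An isotropic subspace meets a negative definite subspace of dimension 4 trivially, so
`dim ker L ≤ 3`. Invariance under `g₂*` is the derivation rule for `ω₀`.
-/

open Module

lemma bform_injective : Function.Injective bform := by
  intro x y h
  have hw (w : V7) : bform x w = bform y w := congrFun h w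
  funext i
  fin_cases i
  · simpa [bform, stdB] using hw (stdB 4)
  · simpa [bform, stdB] using hw (stdB 5)
  · simpa [bform, stdB] using hw (stdB 6)
  · simpa [bform, stdB] using hw (stdB 3)
  · simpa [bform, stdB] using hw (stdB 0)
  · simpa [bform, stdB] using hw (stdB 1)
  · simpa [bform, stdB] using hw (stdB 2)

def bformBilin : LinearMap.BilinForm ℝ V7 :=
  LinearMap.mk₂ ℝ bform
    (fun _ _ _ => by simp only [bform, Pi.add_apply]; ring)
    (fun _ _ _ => by simp only [bform, Pi.smul_apply, smul_eq_mul]; ring)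
    (fun _ _ _ => by simp only [bform, Pi.add_apply]; ring)
    (fun _ _ _ => by simp only [bform, Pi.smul_apply, smul_eq_mul]; ring)

lemma finrank_ker_bformBilin {e : V7} (he : e ≠ 0) :
    finrank ℝ (LinearMap.ker (bformBilin e)) = 6 := by
  have hne : bformBilin e ≠ 0 := by
    intro h0
    apply he
    apply bform_injective
    funext w
    simpa [bformBilin, bform] using LinearMap.congr_fun h0 w
  have := Module.Dual.finrank_ker_add_one_of_ne_zero hne
  simp only [finrank_fintype_fun_eq_card, Fintype.card_fin] at this
  omega

def negDefEmbedding : (Fin 4 → ℝ) →ₗ[ℝ] V7 where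
  toFun z := ![z 0, z 1, z 2, z 3, -z 0, -z 1, -z 2]
  map_add' z z' := by funext i; fin_cases i <;> simp <;> ring
  map_smul' c z := by funext i; fin_cases i <;> simp

lemma negDefEmbedding_injective : Function.Injective negDefEmbedding := by
  intro z z' h
  funext i
  have := congrFun h (Fin.castLE (by norm_num) i)
  fin_cases i <;> simpa [negDefEmbedding] using this

lemma bform_negDefEmbedding (z : Fin 4 → ℝ) :
    bform (negDefEmbedding z) (negDefEmbedding z) =
      -(2 * z 0 ^ 2 + 2 * z 1 ^ 2 + 2 * z 2 ^ 2 + z 3 ^ 2) := by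
  simp [bform, negDefEmbedding]
  ring

theorem IsIsotropic.finrank_le_three {U : Submodule ℝ V7} (hU : IsIsotropic U) :
    finrank ℝ U ≤ 3 := by
  set N := LinearMap.range negDefEmbedding
  have hN : finrank ℝ N = 4 := by
    rw [LinearMap.finrank_range_of_inj negDefEmbedding_injective, Module.finrank_fin_fun]
  have hdisj : U ⊓ N = ⊥ := by
    rw [eq_bot_iff]
    rintro _ ⟨hU', z, rfl⟩
    have hnull := hU _ hU' _ hU'
    rw [bform_negDefEmbedding] at hnull
    have hz : z = 0 := by
      funext i
      fin_cases i <;> simp <;>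
        nlinarith [sq_nonneg (z 0), sq_nonneg (z 1), sq_nonneg (z 2), sq_nonneg (z 3)]
    simp [hz]
  have hsum := Submodule.finrank_sup_add_finrank_inf_eq U N
  rw [hdisj, finrank_bot, hN] at hsum
  have hle := Submodule.finrank_le (U ⊔ N)
  simp only [finrank_fintype_fun_eq_card, Fintype.card_fin] at hle
  omega

/-- `bform` pairs the coordinates `0 ↔ 4`, `1 ↔ 5`, `2 ↔ 6` and `3 ↔ 3` (the last with
a minus sign), so this is the `bform`-dual of `ω₀(u, v, ·)`. -/
def crossProd (u v : V7) : V7 :=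
  ![omega0 u v (stdB 4), omega0 u v (stdB 5), omega0 u v (stdB 6), -omega0 u v (stdB 3),
    omega0 u v (stdB 0), omega0 u v (stdB 1), omega0 u v (stdB 2)]

lemma bform_crossProd (u v w : V7) : bform (crossProd u v) w = omega0 u v w := by
  simp [crossProd, bform, omega0, wedge3, stdB]
  ring

lemma crossProd_eq_zero_iff {u v : V7} : crossProd u v = 0 ↔ ∀ w, omega0 u v w = 0 := by
  rw [← bform_injective.eq_iff, funext_iff]
  simp only [bform_crossProd]
  simp [bform]

lemma crossProd_self (u : V7) : crossProd u u = 0 := by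
  funext i; fin_cases i <;> simp [crossProd, omega0, wedge3] <;> ring

lemma crossProd_smul_right (c : ℝ) (u v : V7) : crossProd u (c • v) = c • crossProd u v := by
  funext i; fin_cases i <;> simp [crossProd, omega0, wedge3] <;> ring

def crossRight (e : V7) : V7 →ₗ[ℝ] V7 where
  toFun v := crossProd v e
  map_add' u v := by funext i; fin_cases i <;> simp [crossProd, omega0, wedge3] <;> ring
  map_smul' c v := by funext i; fin_cases i <;> simp [crossProd, omega0, wedge3] <;> ring

lemma crossRight_apply (e v : V7) : crossRight e v = crossProd v e := rfl

lemma crossProd_zero_left (v : V7) : crossProd 0 v = 0 := map_zero (crossRight v)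

/-- Polarized form of `x × (x × y) = ⟨x, y⟩ x − ⟨x, x⟩ y`. -/
lemma crossProd_crossProd_add (x y z : V7) :
    crossProd (crossProd x z) y + crossProd (crossProd y z) x =
      (2 * bform x y) • z - bform z x • y - bform z y • x := by
  have hs : Real.sqrt 2 ^ 2 = 2 := Real.sq_sqrt (by norm_num)
  funext i
  fin_cases i <;> simp [crossProd, bform, omega0, wedge3, stdB] <;> ring_nf <;> simp only [hs] <;>
    ring_nf

lemma crossRight_crossRight (e v : V7) :
    crossRight e (crossRight e v) = bform e v • e - bform e e • v := by
  have key := crossProd_crossProd_add e v e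
  rw [crossProd_self, crossProd_zero_left, zero_add] at key
  rw [crossRight_apply, crossRight_apply, key]
  module

lemma bform_eq_zero_of_mem_ker_crossRight {e v : V7} (hnull : bform e e = 0) (he : e ≠ 0)
    (hv : v ∈ LinearMap.ker (crossRight e)) : bform e v = 0 := by
  have key := crossRight_crossRight e v
  rw [LinearMap.mem_ker.mp hv, map_zero, hnull, zero_smul, sub_zero, eq_comm] at key
  exact (smul_eq_zero.mp key).resolve_right he

theorem isIsotropic_ker_crossRight {e : V7} (hnull : bform e e = 0) (he : e ≠ 0) :
    IsIsotropic (LinearMap.ker (crossRight e)) := by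
  intro v hv w hw
  have key := crossProd_crossProd_add v w e
  have hv' : crossProd v e = 0 := hv
  have hw' : crossProd w e = 0 := hw
  rw [hv', hw', crossProd_zero_left, crossProd_zero_left,
    bform_eq_zero_of_mem_ker_crossRight hnull he hv,
    bform_eq_zero_of_mem_ker_crossRight hnull he hw] at key
  simpa [he] using key.symm

theorem three_le_finrank_ker_crossRight {e : V7} (hnull : bform e e = 0) (he : e ≠ 0) :
    3 ≤ finrank ℝ (LinearMap.ker (crossRight e)) := by
  set P := LinearMap.ker (bformBilin e)
  set K := LinearMap.ker (crossRight e)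
  have hmap : P.map (crossRight e) ≤ K := by
    rintro _ ⟨v, hv, rfl⟩
    have hv' : bform e v = 0 := hv
    simp [K, crossRight_crossRight, hv', hnull]
  have hker : finrank ℝ (LinearMap.ker ((crossRight e).domRestrict P)) ≤ finrank ℝ K := by
    rw [LinearMap.ker_domRestrict, ← Submodule.finrank_map_subtype_eq,
      Submodule.map_comap_subtype]
    exact Submodule.finrank_mono inf_le_right
  have hrange : finrank ℝ (LinearMap.range ((crossRight e).domRestrict P)) ≤ finrank ℝ K := by
    rw [LinearMap.range_domRestrict]
    exact Submodule.finrank_mono hmap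
  have hP := LinearMap.finrank_range_add_finrank_ker ((crossRight e).domRestrict P)
  rw [finrank_ker_bformBilin he] at hP
  omega

theorem finrank_ker_crossRight {e : V7} (hnull : bform e e = 0) (he : e ≠ 0) :
    finrank ℝ (LinearMap.ker (crossRight e)) = 3 :=
  le_antisymm (isIsotropic_ker_crossRight hnull he).finrank_le_three
    (three_le_finrank_ker_crossRight hnull he)

def crossAnnihilator (E : Submodule ℝ V7) : Submodule ℝ V7 :=
  ⨅ e ∈ E, LinearMap.ker (crossRight e)

lemma mem_crossAnnihilator {E : Submodule ℝ V7} {v : V7} :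
    v ∈ crossAnnihilator E ↔ ∀ e ∈ E, crossProd v e = 0 := by
  simp [crossAnnihilator, crossRight_apply]

lemma crossAnnihilator_span_singleton (e : V7) :
    crossAnnihilator (ℝ ∙ e) = LinearMap.ker (crossRight e) := by
  ext v
  simp only [mem_crossAnnihilator, Submodule.mem_span_singleton, LinearMap.mem_ker,
    crossRight_apply]
  constructor
  · intro hv
    exact hv e ⟨1, one_smul _ _⟩
  · rintro hv _ ⟨c, rfl⟩
    rw [crossProd_smul_right, hv, smul_zero]

theorem InvariantUnder.crossAnnihilator {h : LieSubalgebra ℝ M7} {E : Submodule ℝ V7}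
    (hg2 : ∀ X ∈ h, inG2 X) (hE : InvariantUnder h E) :
    InvariantUnder h (crossAnnihilator E) := by
  intro X hX v hv
  rw [mem_crossAnnihilator] at hv ⊢
  intro e he
  rw [crossProd_eq_zero_iff]
  intro w
  have hder := hg2 X hX v e w
  have hXe := crossProd_eq_zero_iff.mp (hv _ (hE X hX e he)) w
  have hXw := crossProd_eq_zero_iff.mp (hv e he) (X *ᵥ w)
  linarith

theorem stmt3_general (h : LieSubalgebra ℝ M7) (hg2 : ∀ X ∈ h, inG2 X)
    (cross : V7 → V7 → V7)
    (hcross : ∀ u v w : V7, bform (cross u v) w = omega0 u v w)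
    (E : Submodule ℝ V7) (hinv : InvariantUnder h E) (hiso : IsIsotropic E)
    (hdim : Module.finrank ℝ E = 1) :
    ∃ U : Submodule ℝ V7,
      (U : Set V7) = {v : V7 | ∀ e ∈ E, cross v e = 0} ∧
      Module.finrank ℝ U = 3 ∧ IsIsotropic U ∧ InvariantUnder h U ∧ E ≤ U := by
  have hcross_eq : cross = crossProd :=
    funext₂ fun u v => bform_injective (funext fun w => by rw [hcross, bform_crossProd])
  obtain ⟨e, heE, he⟩ :=
    Submodule.exists_mem_ne_zero_of_ne_bot (Submodule.one_le_finrank_iff.mp hdim.ge)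
  have hE : E = ℝ ∙ e := eq_span_singleton_of_mem_of_finrank_eq_one hdim heE he
  have hnull : bform e e = 0 := hiso e heE e heE
  have hU : crossAnnihilator E = LinearMap.ker (crossRight e) := by
    rw [hE, crossAnnihilator_span_singleton]
  refine ⟨crossAnnihilator E, ?_, ?_, ?_, hinv.crossAnnihilator hg2, ?_⟩
  · ext v
    simp [mem_crossAnnihilator, hcross_eq]
  · rw [hU]
    exact finrank_ker_crossRight hnull he
  · rw [hU]
    exact isIsotropic_ker_crossRight hnull he
  · rw [hU, hE, Submodule.span_singleton_le_iff_mem]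
    exact crossProd_self e

/-- Lemma 2.2 (1): For an indecomposable subalgebra `h ⊆ g₂*` and a
1-dimensional `h`-invariant isotropic subspace `E`, the space
`Ê(E) = {v : v × e = 0 ∀ e ∈ E}` is a 3-dimensional isotropic `h`-invariant subspace
containing `E`. -/
theorem stmt3 (h : LieSubalgebra ℝ M7) (hg2 : ∀ X ∈ h, inG2 X)
    (hind : IsIndecomposable h)
    (cross : V7 → V7 → V7)
    (hcross : ∀ u v w : V7, bform (cross u v) w = omega0 u v w)
    (E : Submodule ℝ V7) (hinv : InvariantUnder h E) (hiso : IsIsotropic E)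
    (hdim : Module.finrank ℝ E = 1) :
    ∃ U : Submodule ℝ V7,
      (U : Set V7) = {v : V7 | ∀ e ∈ E, cross v e = 0} ∧
      Module.finrank ℝ U = 3 ∧ IsIsotropic U ∧ InvariantUnder h U ∧ E ≤ U :=
  stmt3_general h hg2 cross hcross E hinv hiso hdim
end
end

section
/- Let h ⊆ g₂* be an indecomposable Lie subalgebra and let E ⊆ V be an h-invariant isotropic subspace with dim E = 2 such that b₁ × b₂ ≠ 0 for a basis b₁, b₂ of E. Then there exists a one-dimensional h-invariant subspace E₀ ⊆ V not contained in E such that E ⊕ E₀ is an isotropic subspace of V. -/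
noncomputable section

open scoped Matrix

attribute [local instance 100] LieRing.ofAssociativeRing

/-!
Elements of `g₂*` are skew for `⟨·,·⟩`: each entry of the skewness condition is a combination
of the conditions `X · ω₀ = 0` on triples of basis vectors. Hence they act as derivations of the
cross product, and an `X` with `X b₁ = a b₁ + b b₂`, `X b₂ = a' b₁ + b' b₂` satisfies
`X n = (a + b') n` for `n = b₁ × b₂`. As `E` is isotropic, the identity
`u × (u × v) = ⟨u,v⟩ u − ⟨u,u⟩ v` gives `b₁ × n = b₂ × n = 0`; writing `n = a b₁ + b b₂` and
crossing with `b₁` and `b₂` then forces `n = 0`, so `n ∉ E`. Finally `n ⊥ E` because `ω₀` is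
alternating, and `⟨n, n⟩ = ω₀(b₁, b₂, n) = −⟨b₁ × n, b₂⟩ = 0`, so `E ⊕ ℝn` is isotropic.
-/

lemma stdB_apply (i j : Fin 7) : stdB i j = if j = i then 1 else 0 := by
  simp [stdB, Pi.single_apply]

lemma mulVec_stdB (X : M7) (i j : Fin 7) : (X *ᵥ stdB i) j = X j i := by
  simp [stdB, Matrix.mulVec_single]

lemma sq_sqrt_two : √2 ^ 2 = 2 := Real.sq_sqrt zero_le_two

lemma bform_comm (x y : V7) : bform x y = bform y x := by
  simp only [bform]; ring

def bformₗ : LinearMap.BilinForm ℝ V7 :=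
  LinearMap.mk₂ ℝ bform
    (fun _ _ _ => by simp only [bform, Pi.add_apply]; ring)
    (fun _ _ _ => by simp only [bform, Pi.smul_apply, smul_eq_mul]; ring)
    (fun _ _ _ => by simp only [bform, Pi.add_apply]; ring)
    (fun _ _ _ => by simp only [bform, Pi.smul_apply, smul_eq_mul]; ring)

@[simp] lemma bformₗ_apply (x y : V7) : bformₗ x y = bform x y := rfl

lemma bform_add_smul_left (a b : ℝ) (x y w : V7) :
    bform (a • x + b • y) w = a * bform x w + b * bform y w := by
  simp [← bformₗ_apply]

lemma bform_add_left (x y w : V7) : bform (x + y) w = bform x w + bform y w := by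
  simp [← bformₗ_apply]

lemma eq_vecCons_bform_stdB (y : V7) :
    y = ![bform y (stdB 4), bform y (stdB 5), bform y (stdB 6), -bform y (stdB 3),
      bform y (stdB 0), bform y (stdB 1), bform y (stdB 2)] := by
  funext j; fin_cases j <;> simp [bform, stdB_apply]

theorem ext_bform {x y : V7} (h : ∀ w, bform x w = bform y w) : x = y := by
  rw [eq_vecCons_bform_stdB x, eq_vecCons_bform_stdB y]
  simp only [h]

theorem IsIsotropic.sup_span_singleton {E : Submodule ℝ V7} {n : V7} (hE : IsIsotropic E)
    (hEn : ∀ e ∈ E, bform e n = 0) (hn : bform n n = 0) :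
    IsIsotropic (E ⊔ Submodule.span ℝ {n}) := by
  intro x hx y hy
  obtain ⟨e, he, _, hm, rfl⟩ := Submodule.mem_sup.mp hx
  obtain ⟨e', he', _, hm', rfl⟩ := Submodule.mem_sup.mp hy
  obtain ⟨c, rfl⟩ := Submodule.mem_span_singleton.mp hm
  obtain ⟨c', rfl⟩ := Submodule.mem_span_singleton.mp hm'
  rw [← bformₗ_apply]
  simp only [map_add, map_smul, LinearMap.add_apply, LinearMap.smul_apply,
    smul_eq_mul, bformₗ_apply]
  rw [hE e he e' he', hEn e he, bform_comm, hEn e' he', hn]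
  ring

theorem IsIsotropic.span_pair {u v : V7} (hiso : IsIsotropic (Submodule.span ℝ {u, v})) :
    bform u u = 0 ∧ bform u v = 0 ∧ bform v v = 0 := by
  have hu : u ∈ Submodule.span ℝ {u, v} := Submodule.subset_span (by simp)
  have hv : v ∈ Submodule.span ℝ {u, v} := Submodule.subset_span (by simp)
  exact ⟨hiso u hu u hu, hiso u hu v hv, hiso v hv v hv⟩

lemma omega0_swap_left (u v w : V7) : omega0 v u w = -omega0 u v w := by
  simp only [omega0, wedge3]; ring

lemma omega0_swap_right (u v w : V7) : omega0 u w v = -omega0 u v w := by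
  simp only [omega0, wedge3]; ring

lemma omega0_add_smul_left (a b : ℝ) (x y v w : V7) :
    omega0 (a • x + b • y) v w = a * omega0 x v w + b * omega0 y v w := by
  simp only [omega0, wedge3, Pi.add_apply, Pi.smul_apply, smul_eq_mul]; ring

lemma omega0_add_smul_middle (a b : ℝ) (u x y w : V7) :
    omega0 u (a • x + b • y) w = a * omega0 u x w + b * omega0 u y w := by
  simp only [omega0, wedge3, Pi.add_apply, Pi.smul_apply, smul_eq_mul]; ring

theorem inG2.bform_mulVec_stdB {X : M7} (hX : inG2 X) (i j : Fin 7) :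
    bform (X *ᵥ stdB i) (stdB j) + bform (stdB i) (X *ᵥ stdB j) = 0 := by
  wlog hij : i ≤ j generalizing i j
  · linarith [this j i (le_of_not_ge hij), bform_comm (X *ᵥ stdB j) (stdB i),
      bform_comm (stdB j) (X *ᵥ stdB i)]
  have e (i j k : Fin 7) := hX (stdB i) (stdB j) (stdB k)
  fin_cases i <;> fin_cases j <;> try simp at hij
  -- the entries `(i, j)`, `i ≤ j`, in lexicographic order, as combinations of the
  -- conditions on basis triples
  map_tacs [
    linear_combination (norm := skip) √2 * e 0 1 2;
    linear_combination (norm := skip) -e 0 1 3;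
    linear_combination (norm := skip) -e 0 2 3;
    linear_combination (norm := skip) -e 0 1 5 / 2 - e 0 2 6 / 2 + √2 / 2 * e 1 2 3;
    linear_combination (norm := skip)
      2 / 3 * e 0 3 4 + √2 / 6 * (e 0 5 6 + e 1 2 4) + (e 1 3 5 + e 2 3 6) / 3;
    linear_combination (norm := skip) √2 / 2 * (e 0 2 4 + e 1 2 5);
    linear_combination (norm := skip) √2 / 2 * (e 1 2 6 - e 0 1 4);
    linear_combination (norm := skip) √2 * e 0 1 6;
    linear_combination (norm := skip) √2 / 2 * (e 0 2 6 - e 0 1 5);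
    linear_combination (norm := skip) -e 0 1 4 / 2 + √2 / 2 * e 0 3 6 - e 1 2 6 / 2;
    linear_combination (norm := skip) √2 / 2 * (e 0 4 6 + e 1 5 6);
    linear_combination (norm := skip)
      -e 0 3 4 / 3 + √2 / 6 * (e 0 5 6 + e 1 2 4) - 2 / 3 * e 1 3 5 + e 2 3 6 / 3;
    linear_combination (norm := skip) -e 1 3 6;
    linear_combination (norm := skip) -√2 * e 0 2 5;
    linear_combination (norm := skip) -e 0 2 4 / 2 - √2 / 2 * e 0 3 5 + e 1 2 5 / 2;
    linear_combination (norm := skip) √2 / 2 * (e 2 5 6 - e 0 4 5);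
    linear_combination (norm := skip) -e 2 3 5;
    linear_combination (norm := skip)
      -e 0 3 4 / 3 + √2 / 6 * (e 0 5 6 + e 1 2 4) + e 1 3 5 / 3 - 2 / 3 * e 2 3 6;
    linear_combination (norm := skip)
      -2 / 3 * e 0 3 4 + √2 / 3 * (e 0 5 6 + e 1 2 4) + 2 / 3 * (e 1 3 5 + e 2 3 6);
    linear_combination (norm := skip) (e 1 4 5 + e 2 4 6) / 2 + √2 / 2 * e 3 5 6;
    linear_combination (norm := skip) (e 0 4 5 + e 2 5 6) / 2 - √2 / 2 * e 2 3 4;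
    linear_combination (norm := skip) (e 0 4 6 - e 1 5 6) / 2 + √2 / 2 * e 1 3 4;
    linear_combination (norm := skip) √2 * e 4 5 6;
    linear_combination (norm := skip) e 3 4 5;
    linear_combination (norm := skip) e 3 4 6;
    linear_combination (norm := skip) √2 * e 2 4 5;
    linear_combination (norm := skip) √2 / 2 * (e 2 4 6 - e 1 4 5);
    linear_combination (norm := skip) -√2 * e 1 4 6]
  all_goals
    simp only [omega0, wedge3, bform, mulVec_stdB, stdB_apply, Fin.reduceEq, reduceIte,
      Fin.zero_eta, Fin.mk_one, Fin.reduceFinMk]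
    ring_nf
  all_goals (rw [sq_sqrt_two]; ring)

theorem inG2.bform_mulVec_add {X : M7} (hX : inG2 X) (u v : V7) :
    bform (X *ᵥ u) v + bform u (X *ᵥ v) = 0 := by
  have h : bformₗ.compl₁₂ X.mulVecLin LinearMap.id + bformₗ.compl₂ X.mulVecLin = 0 :=
    LinearMap.ext_basis (Pi.basisFun ℝ (Fin 7)) (Pi.basisFun ℝ (Fin 7)) fun i j => by
      simpa [stdB] using hX.bform_mulVec_stdB i j
  simpa using LinearMap.congr_fun₂ h u v

def IsCrossProduct (cross : V7 → V7 → V7) : Prop :=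
  ∀ u v w : V7, bform (cross u v) w = omega0 u v w

namespace IsCrossProduct

variable {cross : V7 → V7 → V7}

lemma cross_self (hc : IsCrossProduct cross) (u : V7) : cross u u = 0 :=
  ext_bform fun w => by
    rw [hc]; simp only [omega0, wedge3, bform, Pi.zero_apply]; ring

lemma anticomm (hc : IsCrossProduct cross) (u v : V7) : cross v u = -cross u v :=
  ext_bform fun w => by
    rw [hc, omega0_swap_left, ← hc]; simp only [bform, Pi.neg_apply]; ring

lemma add_smul_left (hc : IsCrossProduct cross) (a b : ℝ) (x y z : V7) :
    cross (a • x + b • y) z = a • cross x z + b • cross y z :=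
  ext_bform fun w => by rw [hc, omega0_add_smul_left, bform_add_smul_left, hc, hc]

lemma add_smul_right (hc : IsCrossProduct cross) (a b : ℝ) (x y z : V7) :
    cross z (a • x + b • y) = a • cross z x + b • cross z y :=
  ext_bform fun w => by rw [hc, omega0_add_smul_middle, bform_add_smul_left, hc, hc]

lemma neg_right (hc : IsCrossProduct cross) (x z : V7) : cross z (-x) = -cross z x := by
  simpa using hc.add_smul_right (-1) 0 x x z

lemma bform_cross_left (hc : IsCrossProduct cross) (u v : V7) : bform (cross u v) u = 0 := by
  rw [hc]; simp only [omega0, wedge3]; ring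

lemma bform_cross_right (hc : IsCrossProduct cross) (u v : V7) : bform (cross u v) v = 0 := by
  rw [hc]; simp only [omega0, wedge3]; ring

lemma eq_vecCons (hc : IsCrossProduct cross) (u v : V7) :
    cross u v = ![omega0 u v (stdB 4), omega0 u v (stdB 5), omega0 u v (stdB 6),
      -omega0 u v (stdB 3), omega0 u v (stdB 0), omega0 u v (stdB 1), omega0 u v (stdB 2)] := by
  conv_lhs => rw [eq_vecCons_bform_stdB (cross u v)]
  simp only [hc u v]

lemma cross_cross (hc : IsCrossProduct cross) (u v : V7) :
    cross u (cross u v) = bform u v • u - bform u u • v :=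
  ext_bform fun w => by
    rw [hc, hc.eq_vecCons]
    simp only [omega0, wedge3, bform, stdB_apply, Fin.isValue, Fin.reduceEq, reduceIte,
      Matrix.cons_val, Matrix.cons_val_zero, Matrix.cons_val_one, Pi.sub_apply, Pi.smul_apply,
      smul_eq_mul]
    ring_nf
    rw [sq_sqrt_two]
    ring

theorem mulVec_cross (hc : IsCrossProduct cross) {X : M7} (hX : inG2 X) (u v : V7) :
    X *ᵥ cross u v = cross (X *ᵥ u) v + cross u (X *ᵥ v) :=
  ext_bform fun w => by
    have hskew := hX.bform_mulVec_add (cross u v) w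
    rw [hc] at hskew
    rw [bform_add_left, hc, hc]
    linarith [hX u v w]

lemma cross_cross_eq_zero (hc : IsCrossProduct cross) {u v : V7} (huu : bform u u = 0)
    (huv : bform u v = 0) : cross u (cross u v) = 0 := by
  rw [hc.cross_cross, huu, huv, zero_smul, zero_smul, sub_zero]

lemma cross_cross_eq_zero_right (hc : IsCrossProduct cross) {u v : V7} (hvv : bform v v = 0)
    (huv : bform u v = 0) : cross v (cross u v) = 0 := by
  rw [hc.anticomm v u, hc.neg_right, hc.cross_cross_eq_zero hvv (by rwa [bform_comm]), neg_zero]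

variable {u v : V7}

lemma span_cross_not_le (hc : IsCrossProduct cross)
    (hiso : IsIsotropic (Submodule.span ℝ {u, v})) (hn : cross u v ≠ 0) :
    ¬ Submodule.span ℝ {cross u v} ≤ Submodule.span ℝ {u, v} := by
  obtain ⟨huu, huv, hvv⟩ := hiso.span_pair
  rw [Submodule.span_singleton_le_iff_mem, Submodule.mem_span_pair]
  rintro ⟨a, b, hab⟩
  have hb : b • cross u v = 0 :=
    calc b • cross u v = cross u (a • u + b • v) := by
          rw [hc.add_smul_right, hc.cross_self, smul_zero, zero_add]
      _ = 0 := by rw [hab, hc.cross_cross_eq_zero huu huv]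
  have ha : a • cross u v = 0 :=
    calc a • cross u v = -cross v (a • u + b • v) := by
          rw [hc.add_smul_right, hc.cross_self, smul_zero, add_zero, hc.anticomm u v, smul_neg,
            neg_neg]
      _ = 0 := by rw [hab, hc.cross_cross_eq_zero_right hvv huv, neg_zero]
  rw [smul_eq_zero] at ha hb
  apply hn
  rw [← hab, ha.resolve_right hn, hb.resolve_right hn, zero_smul, zero_smul, add_zero]

lemma isIsotropic_sup_span_cross (hc : IsCrossProduct cross)
    (hiso : IsIsotropic (Submodule.span ℝ {u, v})) :
    IsIsotropic (Submodule.span ℝ {u, v} ⊔ Submodule.span ℝ {cross u v}) := by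
  obtain ⟨huu, huv, -⟩ := hiso.span_pair
  refine hiso.sup_span_singleton (fun e he => ?_) ?_
  · obtain ⟨a, b, rfl⟩ := Submodule.mem_span_pair.mp he
    rw [bform_add_smul_left, bform_comm u, bform_comm v, hc.bform_cross_left,
      hc.bform_cross_right, mul_zero, mul_zero, add_zero]
  · rw [hc, omega0_swap_right, ← hc, hc.cross_cross_eq_zero huu huv]
    simp [bform]

lemma invariantUnder_span_cross (hc : IsCrossProduct cross) {h : LieSubalgebra ℝ M7}
    (hg2 : ∀ X ∈ h, inG2 X) (hinv : InvariantUnder h (Submodule.span ℝ {u, v})) :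
    InvariantUnder h (Submodule.span ℝ {cross u v}) := by
  have hu : u ∈ Submodule.span ℝ {u, v} := Submodule.subset_span (by simp)
  have hv : v ∈ Submodule.span ℝ {u, v} := Submodule.subset_span (by simp)
  intro X hX x hx
  obtain ⟨c, rfl⟩ := Submodule.mem_span_singleton.mp hx
  obtain ⟨a, b, hXu⟩ := Submodule.mem_span_pair.mp (hinv X hX u hu)
  obtain ⟨a', b', hXv⟩ := Submodule.mem_span_pair.mp (hinv X hX v hv)
  have hXn : X *ᵥ cross u v = (a + b') • cross u v := by
    rw [hc.mulVec_cross (hg2 X hX), ← hXu, ← hXv, hc.add_smul_left, hc.add_smul_right,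
      hc.cross_self, hc.cross_self]
    module
  rw [Matrix.mulVec_smul, hXn, smul_smul]
  exact Submodule.smul_mem _ _ (Submodule.mem_span_singleton_self _)

end IsCrossProduct

theorem stmt5_general (h : LieSubalgebra ℝ M7) (hg2 : ∀ X ∈ h, inG2 X)
    (cross : V7 → V7 → V7)
    (hcross : ∀ u v w : V7, bform (cross u v) w = omega0 u v w)
    (E : Submodule ℝ V7) (hinv : InvariantUnder h E) (hiso : IsIsotropic E)
    (b₁ b₂ : V7) (hb : Submodule.span ℝ {b₁, b₂} = E)
    (hcr : cross b₁ b₂ ≠ 0) :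
    ∃ E₀ : Submodule ℝ V7,
      Module.finrank ℝ E₀ = 1 ∧ InvariantUnder h E₀ ∧ ¬ E₀ ≤ E ∧
      IsIsotropic (E ⊔ E₀) := by
  have hc : IsCrossProduct cross := hcross
  subst hb
  exact ⟨Submodule.span ℝ {cross b₁ b₂}, finrank_span_singleton hcr,
    hc.invariantUnder_span_cross hg2 hinv, hc.span_cross_not_le hiso hcr,
    hc.isIsotropic_sup_span_cross hiso⟩

/-- Lemma 2.2 (3): For an indecomposable subalgebra `h ⊆ g₂*` and a
2-dimensional `h`-invariant isotropic subspace `E` with `b₁ × b₂ ≠ 0` for a basis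
`b₁,b₂` of `E`, there is a 1-dimensional `h`-invariant subspace `E₀ ⊄ E` such that
`E ⊕ E₀` is isotropic. -/
theorem stmt5 (h : LieSubalgebra ℝ M7) (hg2 : ∀ X ∈ h, inG2 X)
    (hind : IsIndecomposable h)
    (cross : V7 → V7 → V7)
    (hcross : ∀ u v w : V7, bform (cross u v) w = omega0 u v w)
    (E : Submodule ℝ V7) (hinv : InvariantUnder h E) (hiso : IsIsotropic E)
    (hdim : Module.finrank ℝ E = 2)
    (b₁ b₂ : V7) (hb : Submodule.span ℝ {b₁, b₂} = E)
    (hcr : cross b₁ b₂ ≠ 0) :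
    ∃ E₀ : Submodule ℝ V7,
      Module.finrank ℝ E₀ = 1 ∧ InvariantUnder h E₀ ∧ ¬ E₀ ≤ E ∧
      IsIsotropic (E ⊔ E₀) :=
  stmt5_general h hg2 cross hcross E hinv hiso b₁ b₂ hb hcr
end
end

section
/- Every nonzero p ∈ P₃ is projectively equivalent to exactly one of the four polynomials x³, x²y, x(x² + y²), x(x² − y²); that is, the lines spanned by these four polynomials form a complete system of representatives of the orbit space of the GL(2,ℝ)-action on the projective space ℙ(P₃). -/
noncomputable section

open scoped Matrix

attribute [local instance 100] LieRing.ofAssociativeRing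

/-!
Every real binary cubic has a real linear factor, because an odd-degree real polynomial has a
root. Moving that factor to `y` brings `p` to the shape `y (b x² + c x y + d y²)`. If `b = 0`
this is `y² (c x + d y)`, which is equivalent to `x²y` or, if `c = 0`, to `x³`. If `b ≠ 0`,
completing the square gives `y (b x² + e y²)`, which is equivalent to `x²y`, `x(x² + y²)` or
`x(x² − y²)` depending on whether `e / b` is zero, positive or negative.

The four normal forms are pairwise inequivalent. Two invariants tell them apart: the largest
number of pairwise independent zeros (1, 2, 1 and 3 for `x³`, `x²y`,
`x(x² + y²)`, `x(x² − y²)`), and being a multiple of the cube of a linear form, which only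
`x³` is.
-/

open Polynomial Filter in
theorem Real.exists_isRoot_of_odd_natDegree {P : ℝ[X]} (hP : Odd P.natDegree) :
    ∃ x, P.IsRoot x := by
  wlog hlead : 0 < P.leadingCoeff generalizing P
  · obtain ⟨x, hx⟩ := this (P := -P) (by rwa [natDegree_neg]) (by
      rw [leadingCoeff_neg, neg_pos]
      exact (not_lt.1 hlead).lt_of_ne (leadingCoeff_ne_zero.2 (by rintro rfl; simp at hP)))
    exact ⟨x, by simpa using hx⟩
  have hdeg : 0 < P.degree := natDegree_pos_iff_degree_pos.1 hP.pos
  have hbot : Tendsto (fun x => P.leadingCoeff * x ^ P.natDegree) atBot atBot := by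
    refine (tendsto_neg_atTop_atBot.comp ((tendsto_const_mul_pow_atTop hP.pos.ne' hlead).comp
      tendsto_neg_atBot_atTop)).congr fun x => ?_
    simp [hP.neg_pow]
  exact P.continuous.surjective (P.tendsto_atTop_of_leadingCoeff_nonneg hdeg hlead.le)
    (P.isEquivalent_atBot_lead.symm.tendsto_atBot hbot) 0

open Polynomial in
lemma Real.exists_cubic_eq_zero {a : ℝ} (ha : a ≠ 0) (b c d : ℝ) :
    ∃ t, a * t ^ 3 + b * t ^ 2 + c * t + d = 0 := by
  obtain ⟨t, ht⟩ := Real.exists_isRoot_of_odd_natDegree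
    (P := C a * X ^ 3 + C b * X ^ 2 + C c * X + C d) (by rw [natDegree_cubic ha]; decide)
  exact ⟨t, by simpa using ht⟩

namespace Matrix

lemma isUnit_of_det_fin_two_ne_zero {K : Type*} [Field K] {a b c d : K}
    (h : a * d - b * c ≠ 0) : IsUnit !![a, b; c, d] := by
  rwa [isUnit_iff_isUnit_det, det_fin_two_of, isUnit_iff_ne_zero]

lemma of_vecMul_fin_two {R : Type*} [NonUnitalNonAssocSemiring R] {m n : Type*} [Fintype m]
    (v w : m → R) (A : Matrix m n R) : of ![v ᵥ* A, w ᵥ* A] = of ![v, w] * A := by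
  ext i j; fin_cases i <;> rfl

lemma vec_fin_two_vecMul {R : Type*} [NonUnitalNonAssocSemiring R] (x y a b c d : R) :
    ![x, y] ᵥ* !![a, b; c, d] = ![x * a + y * c, x * b + y * d] := by
  ext i; fin_cases i <;> simp [vecMul, dotProduct, Fin.sum_univ_two]

lemma eta_vec_fin_two {R : Type*} (v : Fin 2 → R) : v = ![v 0, v 1] := by
  ext i; fin_cases i <;> rfl

end Matrix

open MvPolynomial Matrix

lemma eval_Px (x y : ℝ) : eval ![x, y] Px = x := eval_X _

lemma eval_Py (x y : ℝ) : eval ![x, y] Py = y := eval_X _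

lemma eval_polyAct (A : M2) (p : Poly2) (v : Fin 2 → ℝ) :
    eval v (polyAct A p) = eval (v ᵥ* A) p := by
  induction p using MvPolynomial.induction_on with
  | C a => simp [polyAct]
  | add p q hp hq => simp only [polyAct, map_add] at *; rw [hp, hq]
  | mul_X p i hp =>
    simp only [polyAct, map_mul, aeval_X] at *
    rw [hp]
    simp [Px, Py, vecMul, dotProduct, Fin.sum_univ_two, mul_comm]

lemma polyAct_smul (A : M2) (c : ℝ) (p : Poly2) : polyAct A (c • p) = c • polyAct A p :=
  map_smul (aeval _) c p

lemma polyAct_one (p : Poly2) : polyAct 1 p = p :=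
  MvPolynomial.funext fun v => by rw [eval_polyAct, vecMul_one]

lemma polyAct_polyAct (A B : M2) (p : Poly2) :
    polyAct B (polyAct A p) = polyAct (B * A) p :=
  MvPolynomial.funext fun v => by simp only [eval_polyAct, vecMul_vecMul]

lemma isHomogeneous_polyAct {p : Poly2} {n : ℕ} (hp : p.IsHomogeneous n) (A : M2) :
    (polyAct A p).IsHomogeneous n := by
  have := hp.aeval (n := 1) (fun i => A 0 i • Px + A 1 i • Py) fun i => by
    simp only [Px, Py, smul_eq_C_mul]
    exact (isHomogeneous_C_mul_X _ _).add (isHomogeneous_C_mul_X _ _)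
  rwa [one_mul] at this

namespace ProjEquiv

lemma of_eval {p q : Poly2} (A : M2) (hA : IsUnit A) {c : ℝ} (hc : c ≠ 0)
    (h : ∀ x y : ℝ, eval (![x, y] ᵥ* A) p = c * eval ![x, y] q) : ProjEquiv p q :=
  ⟨A, hA, c, hc, MvPolynomial.funext fun v => by
    rw [eval_polyAct, eta_vec_fin_two v, h, smul_eval]⟩

lemma refl (p : Poly2) : ProjEquiv p p :=
  ⟨1, isUnit_one, 1, one_ne_zero, by rw [polyAct_one, one_smul]⟩

lemma symm {p q : Poly2} (h : ProjEquiv p q) : ProjEquiv q p := by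
  obtain ⟨A, hA, c, hc, h⟩ := h
  refine ⟨A⁻¹, isUnit_nonsing_inv_iff.2 hA, c⁻¹, inv_ne_zero hc, ?_⟩
  rw [← inv_smul_smul₀ hc (polyAct A⁻¹ q), ← polyAct_smul, ← h, polyAct_polyAct,
    nonsing_inv_mul _ ((isUnit_iff_isUnit_det A).1 hA), polyAct_one]

lemma trans {p q r : Poly2} (h₁ : ProjEquiv p q) (h₂ : ProjEquiv q r) : ProjEquiv p r := by
  obtain ⟨A, hA, c, hc, h₁⟩ := h₁
  obtain ⟨B, hB, d, hd, h₂⟩ := h₂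
  exact ⟨B * A, hB.mul hA, c * d, mul_ne_zero hc hd, by
    rw [← polyAct_polyAct, h₁, polyAct_smul, h₂, smul_smul]⟩

lemma of_polyAct {A : M2} (hA : IsUnit A) (p : Poly2) : ProjEquiv p (polyAct A p) :=
  ⟨A, hA, 1, one_ne_zero, (one_smul _ _).symm⟩

lemma ne_zero {p q : Poly2} (h : ProjEquiv p q) (hp : p ≠ 0) : q ≠ 0 := by
  rintro rfl
  obtain ⟨A, -, c, hc, h⟩ := h.symm
  exact hp (by simpa [polyAct, hc] using h.symm)

end ProjEquiv

def cubicForm (a b c d : ℝ) : Poly2 :=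
  C a * Px ^ 3 + C b * (Px ^ 2 * Py) + C c * (Px * Py ^ 2) + C d * Py ^ 3

lemma eval_cubicForm (a b c d x y : ℝ) :
    eval ![x, y] (cubicForm a b c d) = a * x ^ 3 + b * x ^ 2 * y + c * x * y ^ 2 + d * y ^ 3 := by
  simp only [cubicForm, map_add, map_mul, map_pow, eval_C, eval_Px, eval_Py]
  ring

lemma MvPolynomial.IsHomogeneous.exists_eq_cubicForm {p : Poly2} (hp : p.IsHomogeneous 3) :
    ∃ a b c d, p = cubicForm a b c d := by
  refine ⟨coeff (Finsupp.single 0 3) p, coeff (Finsupp.single 0 2 + Finsupp.single 1 1) p,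
    coeff (Finsupp.single 0 1 + Finsupp.single 1 2) p, coeff (Finsupp.single 1 3) p, ?_⟩
  ext m
  obtain ⟨i, j, rfl⟩ : ∃ i j, m = Finsupp.single 0 i + Finsupp.single 1 j :=
    ⟨m 0, m 1, by ext k; fin_cases k <;> simp⟩
  simp only [cubicForm, Px, Py, X, monomial_pow, monomial_mul, one_pow, mul_one, coeff_add,
    coeff_C_mul, coeff_monomial]
  by_cases h : i + j = 3
  · obtain ⟨rfl, rfl⟩ | ⟨rfl, rfl⟩ | ⟨rfl, rfl⟩ | ⟨rfl, rfl⟩ :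
        i = 3 ∧ j = 0 ∨ i = 2 ∧ j = 1 ∨ i = 1 ∧ j = 2 ∨ i = 0 ∧ j = 3 := by omega
    all_goals simp [Finsupp.ext_iff, Fin.forall_fin_two]
  · rw [hp.coeff_eq_zero (by simpa using h)]
    simp (disch := omega) [Finsupp.ext_iff, Fin.forall_fin_two, if_neg]

def HasIndepZeros (n : ℕ) (p : Poly2) : Prop :=
  ∃ v : Fin n → Fin 2 → ℝ, (Pairwise fun i j => (of ![v i, v j]).det ≠ 0) ∧
    ∀ i, eval (v i) p = 0

lemma HasIndepZeros.of_projEquiv {n : ℕ} {p q : Poly2} (h : ProjEquiv p q)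
    (hq : HasIndepZeros n q) : HasIndepZeros n p := by
  obtain ⟨A, hA, c, -, hpq⟩ := h
  obtain ⟨v, hindep, hzero⟩ := hq
  refine ⟨fun i => v i ᵥ* A, fun i j hij => ?_, fun i => ?_⟩
  · show (of ![v i ᵥ* A, v j ᵥ* A]).det ≠ 0
    rw [of_vecMul_fin_two, det_mul]
    exact mul_ne_zero (hindep hij) ((isUnit_iff_isUnit_det A).1 hA).ne_zero
  · rw [← eval_polyAct, hpq, smul_eval, hzero, mul_zero]

lemma ProjEquiv.hasIndepZeros_iff {n : ℕ} {p q : Poly2} (h : ProjEquiv p q) :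
    HasIndepZeros n p ↔ HasIndepZeros n q :=
  ⟨.of_projEquiv h.symm, .of_projEquiv h⟩

lemma not_hasIndepZeros_of_eval_eq_zero {n : ℕ} (hn : 2 ≤ n) {p : Poly2}
    (hp : ∀ v, eval v p = 0 → v 0 = 0) : ¬ HasIndepZeros n p := by
  rintro ⟨v, hindep, hzero⟩
  refine hindep (i := ⟨0, by omega⟩) (j := ⟨1, by omega⟩) (by simp [Fin.ext_iff]) ?_
  simp [det_fin_two, hp _ (hzero _)]

def IsCubeOfLinearForm (p : Poly2) : Prop :=
  ∃ a b c : ℝ, p = c • (C a * Px + C b * Py) ^ 3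

lemma polyAct_linearForm (A : M2) (a b : ℝ) :
    polyAct A (C a * Px + C b * Py) =
      C (a * A 0 0 + b * A 0 1) * Px + C (a * A 1 0 + b * A 1 1) * Py :=
  MvPolynomial.funext fun v => by
    simp only [Px, Py, eval_polyAct, map_add, map_mul, eval_C, eval_X, vecMul, dotProduct,
      Fin.sum_univ_two]
    ring

lemma IsCubeOfLinearForm.of_projEquiv {p q : Poly2} (h : ProjEquiv p q)
    (hp : IsCubeOfLinearForm p) : IsCubeOfLinearForm q := by
  obtain ⟨A, -, c, hc, hpq⟩ := h
  obtain ⟨a, b, d, rfl⟩ := hp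
  refine ⟨a * A 0 0 + b * A 0 1, a * A 1 0 + b * A 1 1, c⁻¹ * d, ?_⟩
  rw [← inv_smul_smul₀ hc q, ← hpq, polyAct_smul, polyAct, map_pow, ← polyAct,
    polyAct_linearForm, smul_smul]

lemma ProjEquiv.isCubeOfLinearForm_iff {p q : Poly2} (h : ProjEquiv p q) :
    IsCubeOfLinearForm p ↔ IsCubeOfLinearForm q :=
  ⟨.of_projEquiv h, .of_projEquiv h.symm⟩

def cubicNormalForms : Set Poly2 :=
  {Px ^ 3, Px ^ 2 * Py, Px * (Px ^ 2 + Py ^ 2), Px * (Px ^ 2 - Py ^ 2)}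

lemma not_hasIndepZeros_Px_pow_three {n : ℕ} (hn : 2 ≤ n) : ¬ HasIndepZeros n (Px ^ 3) :=
  not_hasIndepZeros_of_eval_eq_zero hn fun v hv => by simpa [Px] using hv

lemma not_hasIndepZeros_Px_mul_sq_add_sq {n : ℕ} (hn : 2 ≤ n) :
    ¬ HasIndepZeros n (Px * (Px ^ 2 + Py ^ 2)) :=
  not_hasIndepZeros_of_eval_eq_zero hn fun v hv => by
    simp only [Px, Py, map_mul, map_add, map_pow, eval_X] at hv
    rcases mul_eq_zero.1 hv with h | h
    · exact h
    · nlinarith [sq_nonneg (v 0), sq_nonneg (v 1)]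

lemma hasIndepZeros_two_Px_sq_mul_Py : HasIndepZeros 2 (Px ^ 2 * Py) := by
  refine ⟨![![1, 0], ![0, 1]], fun i j hij => ?_, by simp [Px, Py]⟩
  fin_cases i <;> fin_cases j <;> simp_all [det_fin_two]

lemma not_hasIndepZeros_three_Px_sq_mul_Py : ¬ HasIndepZeros 3 (Px ^ 2 * Py) := by
  rintro ⟨v, hindep, hzero⟩
  have hv : ∀ i, v i 0 = 0 ∨ v i 1 = 0 := fun i => by simpa [Px, Py] using hzero i
  obtain ⟨i, j, hij, hsame⟩ :=
    Fintype.exists_ne_map_eq_of_card_lt (fun i => v i 0 = 0) (by simp)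
  refine hindep hij ?_
  by_cases h : v i 0 = 0
  · have : v j 0 = 0 := hsame ▸ h
    simp [det_fin_two, h, this]
  · have : v j 0 ≠ 0 := fun hj => h (hsame ▸ hj)
    simp [det_fin_two, (hv i).resolve_left h, (hv j).resolve_left this]

lemma hasIndepZeros_three_Px_mul_sq_sub_sq : HasIndepZeros 3 (Px * (Px ^ 2 - Py ^ 2)) := by
  refine ⟨![![0, 1], ![1, 1], ![1, -1]], fun i j hij => ?_, fun i => ?_⟩
  · fin_cases i <;> fin_cases j <;> first | exact absurd rfl hij | norm_num [det_fin_two]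
  · fin_cases i <;> norm_num [Px, Py]

lemma isCubeOfLinearForm_Px_pow_three : IsCubeOfLinearForm (Px ^ 3) :=
  ⟨1, 0, 1, by simp⟩

lemma not_isCubeOfLinearForm_Px_mul_sq_add_sq :
    ¬ IsCubeOfLinearForm (Px * (Px ^ 2 + Py ^ 2)) := by
  rintro ⟨a, b, c, h⟩
  have key (x y : ℝ) : x * (x ^ 2 + y ^ 2) = c * (a * x + b * y) ^ 3 := by
    simpa [eval_Px, eval_Py] using congrArg (eval ![x, y]) h
  have h10 : c * a ^ 3 = 1 := by linear_combination -key 1 0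
  have h01 : c * b ^ 3 = 0 := by linear_combination -key 0 1
  obtain rfl : b = 0 := pow_eq_zero_iff three_ne_zero |>.1
    ((mul_eq_zero.1 h01).resolve_left (left_ne_zero_of_mul_eq_one h10))
  have : (2 : ℝ) = 1 := by linear_combination key 1 1 + h10
  norm_num at this

lemma eq_of_projEquiv_of_mem_cubicNormalForms {q q' : Poly2} (hq : q ∈ cubicNormalForms)
    (hq' : q' ∈ cubicNormalForms) (h : ProjEquiv q q') : q = q' := by
  have h2 := h.hasIndepZeros_iff (n := 2)
  have h3 := h.hasIndepZeros_iff (n := 3)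
  have hcube := h.isCubeOfLinearForm_iff
  simp only [cubicNormalForms, Set.mem_insert_iff, Set.mem_singleton_iff] at hq hq'
  rcases hq with rfl | rfl | rfl | rfl <;> rcases hq' with rfl | rfl | rfl | rfl <;>
    simp_all [not_hasIndepZeros_Px_pow_three, not_hasIndepZeros_Px_mul_sq_add_sq,
      hasIndepZeros_two_Px_sq_mul_Py, not_hasIndepZeros_three_Px_sq_mul_Py,
      hasIndepZeros_three_Px_mul_sq_sub_sq, isCubeOfLinearForm_Px_pow_three,
      not_isCubeOfLinearForm_Px_mul_sq_add_sq]

def HasNormalForm (p : Poly2) : Prop := ∃ q ∈ cubicNormalForms, ProjEquiv p q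

lemma HasNormalForm.of_projEquiv {p q : Poly2} (h : ProjEquiv p q) (hq : HasNormalForm q) :
    HasNormalForm p :=
  let ⟨r, hr, hqr⟩ := hq
  ⟨r, hr, h.trans hqr⟩

lemma exists_projEquiv_cubicForm_zero {p : Poly2} (hp : p.IsHomogeneous 3) :
    ∃ b c d, ProjEquiv p (cubicForm 0 b c d) := by
  obtain ⟨a, b, c, d, hp'⟩ := hp.exists_eq_cubicForm
  by_cases ha : a = 0
  · exact ⟨b, c, d, ha ▸ hp' ▸ .refl _⟩
  obtain ⟨t, ht⟩ := Real.exists_cubic_eq_zero ha b c d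
  have hR : IsUnit !![t, 1; 1, 0] := isUnit_of_det_fin_two_ne_zero (by norm_num)
  obtain ⟨a', b', c', d', hq⟩ := (isHomogeneous_polyAct hp !![t, 1; 1, 0]).exists_eq_cubicForm
  -- the root `(t, 1)` of `p` is the image of `(1, 0)`, so the `x³`-coefficient vanishes
  have h10 := congrArg (eval ![1, 0]) hq
  rw [eval_polyAct, vec_fin_two_vecMul, hp', eval_cubicForm, eval_cubicForm] at h10
  obtain rfl : a' = 0 := by linear_combination ht - h10
  exact ⟨b', c', d', hq ▸ .of_polyAct hR p⟩

lemma projEquiv_cubicForm_complete_square {b : ℝ} (hb : b ≠ 0) (c d : ℝ) :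
    ProjEquiv (cubicForm 0 b c d) (cubicForm 0 b 0 (d - c ^ 2 / (4 * b))) :=
  .of_eval !![1, 0; -c / (2 * b), 1] (isUnit_of_det_fin_two_ne_zero (by norm_num)) one_ne_zero
    fun x y => by
      rw [vec_fin_two_vecMul, eval_cubicForm, eval_cubicForm]
      field_simp
      ring

lemma hasNormalForm_cubicForm_zero_zero_zero {d : ℝ} (hd : d ≠ 0) :
    HasNormalForm (cubicForm 0 0 0 d) :=
  ⟨Px ^ 3, by simp [cubicNormalForms], .of_eval !![0, 1; 1, 0]
    (isUnit_of_det_fin_two_ne_zero (by norm_num)) hd fun x y => by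
      rw [vec_fin_two_vecMul, eval_cubicForm, map_pow, eval_Px]
      ring⟩

lemma hasNormalForm_cubicForm_zero_zero {c : ℝ} (hc : c ≠ 0) (d : ℝ) :
    HasNormalForm (cubicForm 0 0 c d) :=
  ⟨Px ^ 2 * Py, by simp [cubicNormalForms], .of_eval !![-d / c, 1; 1 / c, 0]
    (isUnit_of_det_fin_two_ne_zero (by simpa using hc)) one_ne_zero fun x y => by
      rw [vec_fin_two_vecMul, eval_cubicForm, map_mul, map_pow, eval_Px, eval_Py]
      field_simp
      ring⟩

lemma hasNormalForm_cubicForm_zero_ne_zero_zero {b : ℝ} (hb : b ≠ 0) (e : ℝ) :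
    HasNormalForm (cubicForm 0 b 0 e) := by
  rcases eq_or_ne e 0 with rfl | he
  · exact ⟨Px ^ 2 * Py, by simp [cubicNormalForms], .of_eval 1 isUnit_one hb fun x y => by
      rw [vecMul_one, eval_cubicForm, map_mul, map_pow, eval_Px, eval_Py]
      ring⟩
  -- `(x, y) ↦ (k y, x)` turns `b x² y + e y³` into `x (e x² + b k² y²)`
  obtain ⟨k, hk0, hk⟩ : ∃ k : ℝ, k ≠ 0 ∧ k ^ 2 = |e / b| :=
    ⟨√|e / b|, by simp [he, hb], Real.sq_sqrt (abs_nonneg _)⟩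
  have hA : IsUnit !![0, 1; k, 0] := isUnit_of_det_fin_two_ne_zero (by simpa using hk0)
  rcases lt_or_gt_of_ne (div_ne_zero he hb) with hneg | hpos
  · refine ⟨Px * (Px ^ 2 - Py ^ 2), by simp [cubicNormalForms], .of_eval _ hA he fun x y => ?_⟩
    have hbk : b * k ^ 2 = -e := by rw [hk, abs_of_neg hneg]; field_simp
    rw [vec_fin_two_vecMul, eval_cubicForm, map_mul, map_sub, map_pow, map_pow, eval_Px, eval_Py]
    linear_combination x * y ^ 2 * hbk
  · refine ⟨Px * (Px ^ 2 + Py ^ 2), by simp [cubicNormalForms], .of_eval _ hA he fun x y => ?_⟩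
    have hbk : b * k ^ 2 = e := by rw [hk, abs_of_pos hpos]; field_simp
    rw [vec_fin_two_vecMul, eval_cubicForm, map_mul, map_add, map_pow, map_pow, eval_Px, eval_Py]
    linear_combination x * y ^ 2 * hbk

lemma hasNormalForm_cubicForm_zero {b c d : ℝ} (h : cubicForm 0 b c d ≠ 0) :
    HasNormalForm (cubicForm 0 b c d) := by
  by_cases hb : b = 0
  · subst hb
    by_cases hc : c = 0
    · subst hc
      exact hasNormalForm_cubicForm_zero_zero_zero (by rintro rfl; simp [cubicForm] at h)
    · exact hasNormalForm_cubicForm_zero_zero hc d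
  · exact (hasNormalForm_cubicForm_zero_ne_zero_zero hb _).of_projEquiv
      (projEquiv_cubicForm_complete_square hb c d)

lemma hasNormalForm_of_isHomogeneous {p : Poly2} (hp : p.IsHomogeneous 3) (hp0 : p ≠ 0) :
    HasNormalForm p := by
  obtain ⟨b, c, d, hpq⟩ := exists_projEquiv_cubicForm_zero hp
  exact (hasNormalForm_cubicForm_zero (hpq.ne_zero hp0)).of_projEquiv hpq

/-- Lemma 2.10, first part: every nonzero homogeneous cubic in two
variables is projectively equivalent to exactly one of `x³`, `x²y`, `x(x²+y²)`,
`x(x²−y²)`. -/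
theorem stmt15 (p : Poly2) (hp : p.IsHomogeneous 3) (hp0 : p ≠ 0) :
    ∃! q : Poly2,
      q ∈ ({Px ^ 3, Px ^ 2 * Py, Px * (Px ^ 2 + Py ^ 2), Px * (Px ^ 2 - Py ^ 2)} :
        Set Poly2) ∧ ProjEquiv p q := by
  obtain ⟨q, hq, hpq⟩ := hasNormalForm_of_isHomogeneous hp hp0
  exact ⟨q, ⟨hq, hpq⟩, fun q' ⟨hq', hpq'⟩ =>
    eq_of_projEquiv_of_mem_cubicNormalForms hq' hq (hpq'.symm.trans hpq)⟩
end
end
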